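/- If x ⪯ y (x is weakly majorized by y) and x' ≺ y' (strictly weakly majorized), then the concatenation (x, x') is strictly weakly majorized by (y, y'). -/

import Mathlib

/-! For a multiset `s` of `n` reals, the truncated sum `T_s(t) = ∑_{a ∈ s} min a t` is the lower
envelope of the lines `t ↦ ascTake s m + (n - m) t`, `m ≤ n`, and every one of these lines touches
it: at `t` = the `(m+1)`-st smallest entry, or at any `t` above all entries when `m = n`. So for
equal cardinalities weak majorization is exactly the pointwise order `T_y ≤ T_x`, and since `T` is
additive under concatenation the weak part follows. If `y + y' = x + x'`, then
`T_y + T_y' = T_x + T_x'` together with `T_y ≤ T_x` forces `T_x' ≤ T_y'`, so `x'` and `y'`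
weakly majorize each other and have the same ascending arrangement. -/

open Finset

/-- The ascending arrangement of a finite multiset of reals. -/
noncomputable def asc (s : Multiset ℝ) : List ℝ := s.sort (· ≤ ·)

/-- Sum of the `m` smallest entries of `s`. -/
noncomputable def ascTake (s : Multiset ℝ) (m : ℕ) : ℝ := ((asc s).take m).sum

/-- `WeakMaj a b` : `a` weakly majorizes `b`, i.e. for each `m` the sum of the `m`
smallest entries of `a` is at most the sum of the `m` smallest entries of `b`. -/
def WeakMaj (a b : Multiset ℝ) : Prop := ∀ m : ℕ, ascTake a m ≤ ascTake b m

namespace List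

theorem sum_map_min_le_sum_take_add_nsmul {α : Type*} [AddCommMonoid α] [LinearOrder α]
    [IsOrderedAddMonoid α] (l : List α) (m : ℕ) (t : α) :
    (l.map (min · t)).sum ≤ (l.take m).sum + (l.length - m) • t := by
  conv_lhs => rw [← take_append_drop m l]
  rw [map_append, sum_append]
  gcongr
  · simpa using sum_le_sum (l := l.take m) fun a _ => min_le_left a t
  · simpa using sum_le_card_nsmul ((l.drop m).map (min · t)) t
      (forall_mem_map.2 fun a _ => min_le_right a t)

theorem sum_map_min_eq_sum_take_add_nsmul {α : Type*} [AddCommMonoid α] [LinearOrder α]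
    {l : List α} {m : ℕ} {t : α} (hle : ∀ a ∈ l.take m, a ≤ t) (hge : ∀ a ∈ l.drop m, t ≤ a) :
    (l.map (min · t)).sum = (l.take m).sum + (l.length - m) • t := by
  conv_lhs => rw [← take_append_drop m l]
  rw [map_append, sum_append, map_congr_left fun a ha => min_eq_left (hle a ha), map_id',
    map_congr_left fun a ha => min_eq_right (hge a ha), map_const', sum_replicate, length_drop]

theorem Pairwise.getElem_le_of_mem_drop {α : Type*} [Preorder α] {l : List α}
    (hl : l.Pairwise (· ≤ ·)) {m : ℕ} (hm : m < l.length) {b : α} (hb : b ∈ l.drop m) :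
    l[m] ≤ b := by
  have hdrop := hl.drop (i := m)
  rw [drop_eq_getElem_cons hm] at hb hdrop
  rcases mem_cons.1 hb with rfl | hb
  · rfl
  · exact rel_of_pairwise_cons hdrop hb

theorem Pairwise.le_getElem_of_mem_take {α : Type*} [Preorder α] {l : List α}
    (hl : l.Pairwise (· ≤ ·)) {m : ℕ} (hm : m < l.length) {a : α} (ha : a ∈ l.take m) :
    a ≤ l[m] := by
  rw [← take_append_drop m l, pairwise_append] at hl
  refine hl.2.2 a ha l[m] ?_
  rw [drop_eq_getElem_cons hm]
  exact mem_cons_self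

theorem Pairwise.exists_sum_map_min_eq {α : Type*} [AddCommMonoid α] [LinearOrder α]
    {l : List α} (hl : l.Pairwise (· ≤ ·)) (t : α) :
    ∃ m ≤ l.length, (l.map (min · t)).sum = (l.take m).sum + (l.length - m) • t := by
  refine ⟨l.findIdx (t ≤ ·), findIdx_le_length, sum_map_min_eq_sum_take_add_nsmul ?_ ?_⟩
  · intro a ha
    obtain ⟨j, hj, rfl⟩ := mem_take_iff_getElem.1 ha
    have hj' := not_of_lt_findIdx (p := (t ≤ ·)) (lt_min_iff.1 hj).1
    exact (not_le.1 (of_decide_eq_false hj')).le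
  · intro b hb
    have hm : l.findIdx (t ≤ ·) < l.length := by
      by_contra hm
      simp [drop_eq_nil_of_le (not_lt.1 hm)] at hb
    exact le_trans (of_decide_eq_true (findIdx_getElem (w := hm)))
      (hl.getElem_le_of_mem_drop hm hb)

theorem Pairwise.exists_sum_map_min_eq_of_le {α : Type*} [AddCommMonoid α] [LinearOrder α]
    {l : List α} (hl : l.Pairwise (· ≤ ·)) {m : ℕ} (hm : m ≤ l.length) :
    ∃ t, (l.map (min · t)).sum = (l.take m).sum + (l.length - m) • t := by
  rcases hm.lt_or_eq with hm | rfl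
  · exact ⟨l[m], sum_map_min_eq_sum_take_add_nsmul (fun _ ha => hl.le_getElem_of_mem_take hm ha)
      (fun _ hb => hl.getElem_le_of_mem_drop hm hb)⟩
  · obtain ⟨t, ht⟩ := l.finite_toSet.bddAbove
    exact ⟨t, sum_map_min_eq_sum_take_add_nsmul (fun _ ha => ht (mem_of_mem_take ha)) (by simp)⟩

end List

lemma pairwise_asc (s : Multiset ℝ) : (asc s).Pairwise (· ≤ ·) := s.pairwise_sort _

lemma length_asc (s : Multiset ℝ) : (asc s).length = Multiset.card s := Multiset.length_sort _

lemma asc_injective : Function.Injective asc := fun s s' h => by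
  rw [← Multiset.sort_eq s (· ≤ ·), ← Multiset.sort_eq s' (· ≤ ·)]
  exact congrArg _ h

noncomputable def truncSum (s : Multiset ℝ) (t : ℝ) : ℝ := (s.map (min · t)).sum

lemma truncSum_add (s s' : Multiset ℝ) (t : ℝ) :
    truncSum (s + s') t = truncSum s t + truncSum s' t := by
  simp [truncSum]

lemma truncSum_eq_sum_map_asc (s : Multiset ℝ) (t : ℝ) :
    truncSum s t = ((asc s).map (min · t)).sum := by
  rw [truncSum, asc, ← Multiset.sum_coe, ← Multiset.map_coe, Multiset.sort_eq]

lemma truncSum_le_ascTake_add_nsmul (s : Multiset ℝ) (m : ℕ) (t : ℝ) :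
    truncSum s t ≤ ascTake s m + (Multiset.card s - m) • t := by
  simpa [truncSum_eq_sum_map_asc, ascTake, length_asc] using
    (asc s).sum_map_min_le_sum_take_add_nsmul m t

lemma exists_truncSum_eq_ascTake_add_nsmul (s : Multiset ℝ) (t : ℝ) :
    ∃ m ≤ Multiset.card s, truncSum s t = ascTake s m + (Multiset.card s - m) • t := by
  simpa [truncSum_eq_sum_map_asc, ascTake, length_asc] using
    (pairwise_asc s).exists_sum_map_min_eq t

lemma exists_truncSum_eq_ascTake_add_nsmul_of_le {s : Multiset ℝ} {m : ℕ}
    (hm : m ≤ Multiset.card s) :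
    ∃ t, truncSum s t = ascTake s m + (Multiset.card s - m) • t := by
  simpa [truncSum_eq_sum_map_asc, ascTake, length_asc] using
    (pairwise_asc s).exists_sum_map_min_eq_of_le (hm.trans_eq (length_asc s).symm)

lemma ascTake_min_card (s : Multiset ℝ) (m : ℕ) :
    ascTake s (min m (Multiset.card s)) = ascTake s m := by
  rw [ascTake, ascTake, ← length_asc, ← List.take_eq_take_min]

theorem weakMaj_iff_forall_truncSum_le {a b : Multiset ℝ}
    (hcard : Multiset.card a = Multiset.card b) :
    WeakMaj a b ↔ ∀ t, truncSum a t ≤ truncSum b t := by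
  constructor
  · intro h t
    obtain ⟨m, -, hb⟩ := exists_truncSum_eq_ascTake_add_nsmul b t
    calc truncSum a t ≤ ascTake a m + (Multiset.card a - m) • t :=
          truncSum_le_ascTake_add_nsmul a m t
      _ ≤ ascTake b m + (Multiset.card b - m) • t := by rw [hcard]; gcongr; exact h m
      _ = truncSum b t := hb.symm
  · intro h m
    rw [← ascTake_min_card a, ← ascTake_min_card b, ← hcard]
    obtain ⟨t, ha⟩ := exists_truncSum_eq_ascTake_add_nsmul_of_le (min_le_right m (Multiset.card a))
    have hb := truncSum_le_ascTake_add_nsmul b (min m (Multiset.card a)) t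
    rw [← hcard] at hb
    linarith [h t]

theorem WeakMaj.asc_eq {a b : Multiset ℝ} (h : WeakMaj a b) (h' : WeakMaj b a)
    (hcard : Multiset.card a = Multiset.card b) : asc a = asc b :=
  List.eq_of_sum_take_eq (by rw [length_asc, length_asc, hcard])
    fun m _ => le_antisymm (h m) (h' m)

theorem stmt10_general (x y x' y' : Multiset ℝ)
    (hcard : Multiset.card x = Multiset.card y)
    (hcard' : Multiset.card x' = Multiset.card y')
    (h1 : WeakMaj y x) (h2 : WeakMaj y' x') (h2s : asc y' ≠ asc x') :
    WeakMaj (y + y') (x + x') ∧ asc (y + y') ≠ asc (x + x') := by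
  have hle := (weakMaj_iff_forall_truncSum_le hcard.symm).1 h1
  have hle' := (weakMaj_iff_forall_truncSum_le hcard'.symm).1 h2
  refine ⟨(weakMaj_iff_forall_truncSum_le (by simp [hcard, hcard'])).2 fun t => ?_, fun heq => ?_⟩
  · rw [truncSum_add, truncSum_add]
    exact add_le_add (hle t) (hle' t)
  · have hsum : y + y' = x + x' := asc_injective heq
    have h2' : WeakMaj x' y' := (weakMaj_iff_forall_truncSum_le hcard').2 fun t => by
      have := congrArg (truncSum · t) hsum
      simp only [truncSum_add] at this
      linarith [hle t]
    exact h2s (h2.asc_eq h2' hcard'.symm)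

theorem stmt10 (x y x' y' : Multiset ℝ)
    (hcard : Multiset.card x = Multiset.card y)
    (hcard' : Multiset.card x' = Multiset.card y')
    (hx : ∀ a ∈ x, (0:ℝ) ≤ a) (hy : ∀ a ∈ y, (0:ℝ) ≤ a)
    (hx' : ∀ a ∈ x', (0:ℝ) ≤ a) (hy' : ∀ a ∈ y', (0:ℝ) ≤ a)
    (h1 : WeakMaj y x) (h2 : WeakMaj y' x') (h2s : asc y' ≠ asc x') :
    WeakMaj (y + y') (x + x') ∧ asc (y + y') ≠ asc (x + x') :=
  stmt10_general x y x' y' hcard hcard' h1 h2 h2s
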